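/- (Case X ∈ span{U,V}) Suppose x₁ ≡ 0, so X(s) = x₂(s)U(s) + x₃(s)V(s). Then for every s, det(r'(s), X(s), X'(s)) = x₂(s)x₃'(s) − x₃(s)x₂'(s); moreover, if the derivative X'(s) is nonzero, the distribution parameter P(s) = det(r'(s), X(s), X'(s))/‖X'(s)‖² equals (x₂(s)x₃'(s) − x₃(s)x₂'(s)) / [(κ(s)x₃(s)sin θ(s) − κ(s)x₂(s)cos θ(s))² + x₂'(s)² + x₃'(s)²]. -/

import Mathlib

open Real
open scoped RealInnerProductSpace

/-- The cross product on `ℝ³ = EuclideanSpace ℝ (Fin 3)`. -/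
noncomputable def cross3 (a b : EuclideanSpace ℝ (Fin 3)) : EuclideanSpace ℝ (Fin 3) :=
  WithLp.toLp 2 (crossProduct a b)

lemma cross3_add_right (a b c : EuclideanSpace ℝ (Fin 3)) :
    cross3 a (b + c) = cross3 a b + cross3 a c := by
  unfold cross3; rw [WithLp.ofLp_add, map_add, WithLp.toLp_add]

lemma cross3_smul_right (t : ℝ) (a b : EuclideanSpace ℝ (Fin 3)) :
    cross3 a (t • b) = t • cross3 a b := by
  unfold cross3; rw [WithLp.ofLp_smul, map_smul, WithLp.toLp_smul]

lemma cross3_anticomm (a b : EuclideanSpace ℝ (Fin 3)) :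
    cross3 a b = - cross3 b a := by
  unfold cross3; rw [← WithLp.toLp_neg, cross_anticomm]

theorem rmf_span_UV_distribution
    (r T U V : ℝ → EuclideanSpace ℝ (Fin 3)) (κ θ x₁ x₂ x₃ : ℝ → ℝ)
    (hr : ContDiff ℝ (⊤ : ℕ∞) r) (hκsm : ContDiff ℝ (⊤ : ℕ∞) κ) (hθsm : ContDiff ℝ (⊤ : ℕ∞) θ)
    (hTsm : ContDiff ℝ (⊤ : ℕ∞) T) (hUsm : ContDiff ℝ (⊤ : ℕ∞) U) (hVsm : ContDiff ℝ (⊤ : ℕ∞) V)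
    (hx₁sm : ContDiff ℝ (⊤ : ℕ∞) x₁) (hx₂sm : ContDiff ℝ (⊤ : ℕ∞) x₂) (hx₃sm : ContDiff ℝ (⊤ : ℕ∞) x₃)
    (hκpos : ∀ s, 0 < κ s)
    (hunit : ∀ s, ‖deriv r s‖ = 1)
    (hT : ∀ s, T s = deriv r s)
    (hTnorm : ∀ s, ‖T s‖ = 1) (hUnorm : ∀ s, ‖U s‖ = 1) (hVnorm : ∀ s, ‖V s‖ = 1)
    (hTU : ∀ s, ⟪T s, U s⟫ = 0) (hTV : ∀ s, ⟪T s, V s⟫ = 0) (hUV : ∀ s, ⟪U s, V s⟫ = 0)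
    (hTUV : ∀ s, cross3 (T s) (U s) = V s)
    (hUVT : ∀ s, cross3 (U s) (V s) = T s)
    (hVTU : ∀ s, cross3 (V s) (T s) = U s)
    (hT' : ∀ s, deriv T s = (κ s * Real.cos (θ s)) • U s - (κ s * Real.sin (θ s)) • V s)
    (hU' : ∀ s, deriv U s = (-(κ s * Real.cos (θ s))) • T s)
    (hV' : ∀ s, deriv V s = (κ s * Real.sin (θ s)) • T s)
    (X : ℝ → EuclideanSpace ℝ (Fin 3))
    (hX : ∀ s, X s = x₁ s • T s + x₂ s • U s + x₃ s • V s)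
    (hx1 : ∀ s, x₁ s = 0)
    : ∀ s : ℝ, ⟪cross3 (deriv r s) (X s), deriv X s⟫ = x₂ s * deriv x₃ s - x₃ s * deriv x₂ s
      ∧ (deriv X s ≠ 0 →
        ⟪cross3 (deriv r s) (X s), deriv X s⟫ / ‖deriv X s‖ ^ 2
          = (x₂ s * deriv x₃ s - x₃ s * deriv x₂ s)
            / ((κ s * x₃ s * Real.sin (θ s) - κ s * x₂ s * Real.cos (θ s)) ^ 2
              + deriv x₂ s ^ 2 + deriv x₃ s ^ 2)) := by
  intro s
  -- basic inner product facts
  have hUT : ⟪U s, T s⟫ = 0 := by rw [real_inner_comm]; exact hTU s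
  have hVT : ⟪V s, T s⟫ = 0 := by rw [real_inner_comm]; exact hTV s
  have hVU : ⟪V s, U s⟫ = 0 := by rw [real_inner_comm]; exact hUV s
  have hTT : ⟪T s, T s⟫ = 1 := by
    rw [real_inner_self_eq_norm_sq, hTnorm]; norm_num
  have hUU : ⟪U s, U s⟫ = 1 := by
    rw [real_inner_self_eq_norm_sq, hUnorm]; norm_num
  have hVV : ⟪V s, V s⟫ = 1 := by
    rw [real_inner_self_eq_norm_sq, hVnorm]; norm_num
  have key : ∀ (a b c a' b' c' : ℝ),
      ⟪a • T s + b • U s + c • V s, a' • T s + b' • U s + c' • V s⟫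
        = a * a' + b * b' + c * c' := by
    intro a b c a' b' c'
    simp only [inner_add_left, inner_add_right, real_inner_smul_left, real_inner_smul_right,
      hTU s, hTV s, hUV s, hUT, hVT, hVU, hTT, hUU, hVV]
    ring
  -- X as a function
  have hXfun : X = fun t => x₂ t • U t + x₃ t • V t := by
    funext t; rw [hX t, hx1 t]; simp
  -- derivative of X
  set a : ℝ := x₃ s * (κ s * Real.sin (θ s)) - x₂ s * (κ s * Real.cos (θ s)) with ha
  have hdX : deriv X s = a • T s + deriv x₂ s • U s + deriv x₃ s • V s := by
    have hU2 : HasDerivAt U (deriv U s) s :=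
      ((hUsm.differentiable (by simp)) s).hasDerivAt
    have hV2 : HasDerivAt V (deriv V s) s :=
      ((hVsm.differentiable (by simp)) s).hasDerivAt
    have hx2 : HasDerivAt x₂ (deriv x₂ s) s :=
      ((hx₂sm.differentiable (by simp)) s).hasDerivAt
    have hx3 : HasDerivAt x₃ (deriv x₃ s) s :=
      ((hx₃sm.differentiable (by simp)) s).hasDerivAt
    have h1 : HasDerivAt X
        ((x₂ s • deriv U s + deriv x₂ s • U s) + (x₃ s • deriv V s + deriv x₃ s • V s)) s := by
      rw [hXfun]; exact (hx2.smul hU2).add (hx3.smul hV2)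
    rw [h1.deriv, hU' s, hV' s, ha]
    module
  -- X at s
  have hXs : X s = (0:ℝ) • T s + x₂ s • U s + x₃ s • V s := by
    rw [hX s, hx1 s]
  have hcross : cross3 (deriv r s) (X s) = (0:ℝ) • T s + (- x₃ s) • U s + x₂ s • V s := by
    rw [← hT s, hX s, hx1 s]
    have hTV3 : cross3 (T s) (V s) = - U s := by
      rw [cross3_anticomm, hVTU s]
    simp only [zero_smul, zero_add, cross3_add_right, cross3_smul_right, hTUV s, hTV3]
    module
  have part1 : ⟪cross3 (deriv r s) (X s), deriv X s⟫
      = x₂ s * deriv x₃ s - x₃ s * deriv x₂ s := by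
    rw [hcross, hdX, key]; ring
  refine ⟨part1, fun hne => ?_⟩
  have hnorm : ‖deriv X s‖ ^ 2
      = (κ s * x₃ s * Real.sin (θ s) - κ s * x₂ s * Real.cos (θ s)) ^ 2
        + deriv x₂ s ^ 2 + deriv x₃ s ^ 2 := by
    rw [← real_inner_self_eq_norm_sq, hdX, key, ha]; ring
  rw [part1, hnorm]
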